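/- Let p be a prime and let A be a sequence (multiset) of p−1 nonzero elements of the cyclic group Z_p. Then S_A ∪ {0} = Z_p, i.e., every nonzero element of Z_p is a sum of a nonempty subsequence of A. -/

import Mathlib

/-!
Let `T(A)` be the set of sums of all subsequences of `A`, the empty one included. Then
`T(a :: A) = {0, a} + T(A)`, and for `a ≠ 0` the Cauchy–Davenport theorem gives
`|T(a :: A)| ≥ min p (|T(A)| + 1)`. By induction `|T(A)| ≥ min p (|A| + 1) = p` when `|A| = p - 1`,
so `T(A) = S_A ∪ {0}` is all of `ℤ/pℤ`.
-/

/-- The set of sums of nonempty subsequences of the multiset `A`. -/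
def msubseqSums {G : Type*} [AddCommMonoid G] (A : Multiset G) : Set G :=
  {x | ∃ B : Multiset G, B ≤ A ∧ B ≠ 0 ∧ B.sum = x}

open Finset Pointwise

def subsetSums {G : Type*} [AddCommMonoid G] [DecidableEq G] (A : Multiset G) : Finset G :=
  (A.powerset.map Multiset.sum).toFinset

section AddCommMonoid

variable {G : Type*} [AddCommMonoid G] [DecidableEq G]

lemma mem_subsetSums {A : Multiset G} {x : G} : x ∈ subsetSums A ↔ ∃ B ≤ A, B.sum = x := by
  simp [subsetSums]

lemma zero_mem_subsetSums (A : Multiset G) : (0 : G) ∈ subsetSums A :=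
  mem_subsetSums.2 ⟨0, Multiset.zero_le A, Multiset.sum_zero⟩

lemma subsetSums_zero : subsetSums (0 : Multiset G) = {0} := by
  simp [subsetSums]

lemma subsetSums_cons (a : G) (A : Multiset G) :
    subsetSums (a ::ₘ A) = {0, a} + subsetSums A := by
  ext x
  simp [subsetSums, Multiset.powerset_cons, mem_add, or_comm]

lemma msubseqSums_union_zero (A : Multiset G) :
    msubseqSums A ∪ {0} = (subsetSums A : Set G) := by
  ext x
  simp only [msubseqSums, Set.mem_union, Set.mem_singleton_iff, mem_coe,
    mem_subsetSums]
  constructor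
  · rintro (⟨B, hBA, -, rfl⟩ | rfl)
    exacts [⟨B, hBA, rfl⟩, ⟨0, Multiset.zero_le A, Multiset.sum_zero⟩]
  · rintro ⟨B, hBA, rfl⟩
    rcases eq_or_ne B 0 with rfl | hB
    exacts [Or.inr Multiset.sum_zero, Or.inl ⟨B, hBA, hB, rfl⟩]

end AddCommMonoid

lemma ZMod.min_le_card_subsetSums {p : ℕ} (hp : p.Prime) {A : Multiset (ZMod p)}
    (hA : ∀ a ∈ A, a ≠ 0) : min p (Multiset.card A + 1) ≤ #(subsetSums A) := by
  induction A using Multiset.induction with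
  | empty => simp [subsetSums_zero]
  | cons a A ih =>
    have ih := ih fun b hb ↦ hA b (Multiset.mem_cons_of_mem hb)
    have hpair : #({0, a} : Finset (ZMod p)) = 2 :=
      card_pair (hA a (Multiset.mem_cons_self a A)).symm
    have hCD := ZMod.cauchy_davenport hp (insert_nonempty 0 {a})
      ⟨0, zero_mem_subsetSums A⟩
    rw [hpair] at hCD
    rw [subsetSums_cons, Multiset.card_cons]
    omega

theorem stmt_9 (p : ℕ) (hp : p.Prime) (A : Multiset (ZMod p))
    (hcard : Multiset.card A = p - 1) (hzero : ∀ a ∈ A, a ≠ 0) :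
    msubseqSums A ∪ {0} = Set.univ := by
  have : NeZero p := ⟨hp.ne_zero⟩
  have hbound := ZMod.min_le_card_subsetSums hp hzero
  have hfull : subsetSums A = univ := by
    apply eq_univ_of_card
    have := card_le_univ (subsetSums A)
    rw [ZMod.card] at this ⊢
    omega
  rw [msubseqSums_union_zero, hfull, coe_univ]
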